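/- For every integer n ≥ 0, the central Delannoy number D(n) = D(n,n) satisfies D(n) = ((-1)^n / n!) · det W, where W is the (n+1)×(n+1) matrix whose first column has entries W_{i,1} = ⟨n⟩_{i-1} for 1 ≤ i ≤ n+1, and whose remaining entries are W_{i,j} = (-1)^{i-j} · C(i-1, j-1) · ⟨n+1⟩_{i-j} for 1 ≤ i ≤ n+1 and 2 ≤ j ≤ n+1 (entries with i-j < 0 being 0). -/

import Mathlib

/-- The Delannoy numbers: `D(p,q) = ∑_{i=0}^{p} C(p,i) C(q,i) 2^i`. -/
def delannoy (p q : ℕ) : ℕ :=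
  ∑ i ∈ Finset.range (p + 1), p.choose i * q.choose i * 2 ^ i

/-- The `(q+1) × (q+1)` matrix `W(p,q)` (indexed from 0): the first column has entries
`⟨p⟩_i`, and for columns `j ≥ 1` the entry in row `i` is
`(-1)^{i+1-j} · C(i, j-1) · ⟨p+1⟩_{i+1-j}`, with entries above the superdiagonal
(i.e. with `j > i + 1`) being `0` since the binomial coefficient vanishes there. -/
def delannoyMatrix (p q : ℕ) : Matrix (Fin (q + 1)) (Fin (q + 1)) ℚ :=
  Matrix.of fun i j =>
    if (j : ℕ) = 0 then (p.descFactorial (i : ℕ) : ℚ)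
    else (-1 : ℚ) ^ ((i : ℕ) + 1 - (j : ℕ)) * (Nat.choose (i : ℕ) ((j : ℕ) - 1)) *
      ((p + 1).descFactorial ((i : ℕ) + 1 - (j : ℕ)) : ℚ)

/-!
The matrix `L` with entries `(-1)^(i-k) C(i,k) ⟨p+1⟩_{i-k}` is lower unitriangular, and its
columns `0, …, q-1` are the columns `1, …, q` of `W(p,q)`. Since
`∑ₖ D(p,k) xᵏ = (1+x)^p / (1-x)^(p+1)` and `L` is conjugate by `diag(i!)` to multiplication
by `(1-x)^(p+1)`, `L` maps `(k! D(p,k))ₖ` to the first column `(⟨p⟩ᵢ)ᵢ` of `W`. Hence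
`W = L B`, where `B` has first column `(k! D(p,k))ₖ` followed by the shifted identity, and
`det W = det B = (-1)^q q! D(p,q)`.
-/

open PowerSeries Nat Matrix

variable {R : Type*} [CommRing R]

theorem PowerSeries.coeff_one_add_X_pow (m k : ℕ) :
    coeff k ((1 + X : R⟦X⟧) ^ m) = m.choose k := by
  rw [← Polynomial.coe_X, ← Polynomial.coe_one, ← Polynomial.coe_add, ← Polynomial.coe_pow,
    Polynomial.coeff_coe, Polynomial.coeff_one_add_X_pow]

theorem PowerSeries.coeff_one_sub_X_pow (m k : ℕ) :
    coeff k ((1 - X : R⟦X⟧) ^ m) = (-1) ^ k * m.choose k := by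
  have : (1 - X : R⟦X⟧) ^ m = rescale (-1 : R) ((1 + X) ^ m) := by
    simp [sub_eq_add_neg]
  rw [this, coeff_rescale, coeff_one_add_X_pow]

theorem PowerSeries.mk_choose_mul_one_sub_X_pow (j : ℕ) :
    (mk fun k => (k.choose j : R)) * (1 - X) ^ (j + 1) = X ^ j := by
  have : (mk fun k => (k.choose j : R)) = X ^ j * mk fun k => ((j + k).choose j : R) := by
    ext k
    rw [coeff_X_pow_mul', coeff_mk]
    split_ifs with h
    · rw [coeff_mk, Nat.add_sub_cancel' h]
    · rw [Nat.choose_eq_zero_of_lt (not_le.mp h), Nat.cast_zero]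
  rw [this, mul_assoc, mk_add_choose_mul_one_sub_pow_eq_one, mul_one]

theorem mk_delannoy_mul_one_sub_X_pow (p : ℕ) :
    (mk fun k => (delannoy p k : R)) * (1 - X) ^ (p + 1) = (1 + X) ^ p := by
  have hD : (mk fun k => (delannoy p k : R)) =
      ∑ j ∈ Finset.range (p + 1),
        (p.choose j * 2 ^ j : R) • mk fun k => (k.choose j : R) := by
    ext k
    simp only [delannoy, coeff_mk, map_sum, Nat.cast_sum, Nat.cast_mul, Nat.cast_pow,
      Nat.cast_ofNat, coeff_smul, smul_eq_mul]
    exact Finset.sum_congr rfl fun j _ => by ring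
  calc (mk fun k => (delannoy p k : R)) * (1 - X) ^ (p + 1)
      = ∑ j ∈ Finset.range (p + 1), (p.choose j * 2 ^ j : R) •
          ((mk fun k => (k.choose j : R)) * (1 - X) ^ (j + 1) * (1 - X) ^ (p - j)) := by
        rw [hD, Finset.sum_mul]
        refine Finset.sum_congr rfl fun j hj => ?_
        rw [mul_assoc, ← pow_add, Nat.add_right_comm, Nat.add_sub_cancel' (by grind),
          smul_mul_assoc]
    _ = (2 * X + (1 - X)) ^ p := by
        simp only [mk_choose_mul_one_sub_X_pow, add_pow, mul_pow]
        refine Finset.sum_congr rfl fun j _ => ?_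
        rw [Algebra.smul_def, map_mul, map_pow, map_natCast, map_ofNat]
        ring
    _ = (1 + X) ^ p := by ring

theorem sum_delannoy_mul_neg_one_pow_mul_choose (p i : ℕ) :
    ∑ k ∈ Finset.range (i + 1), (delannoy p k : R) * ((-1) ^ (i - k) * (p + 1).choose (i - k))
      = p.choose i := by
  have h := congrArg (coeff i) (mk_delannoy_mul_one_sub_X_pow (R := R) p)
  rw [coeff_mul, Finset.Nat.sum_antidiagonal_eq_sum_range_succ
    (fun k l => coeff k (mk fun k => (delannoy p k : R)) * coeff l ((1 - X : R⟦X⟧) ^ (p + 1))),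
    coeff_one_add_X_pow] at h
  simpa only [coeff_mk, coeff_one_sub_X_pow] using h

theorem Nat.choose_mul_descFactorial_mul_factorial {i k : ℕ} (hk : k ≤ i) (a : ℕ) :
    i.choose k * a.descFactorial (i - k) * k ! = i ! * a.choose (i - k) := by
  rw [Nat.descFactorial_eq_factorial_mul_choose, ← Nat.choose_mul_factorial_mul_factorial hk]
  ring

variable (R) in
def signedBinomialMatrix (a m : ℕ) : Matrix (Fin m) (Fin m) R :=
  Matrix.of fun i k =>
    (-1) ^ ((i : ℕ) - k) * ((i : ℕ).choose k) * (a.descFactorial ((i : ℕ) - k))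

theorem det_signedBinomialMatrix (a m : ℕ) : (signedBinomialMatrix R a m).det = 1 := by
  rw [det_of_isLowerTriangular]
  · simp [signedBinomialMatrix]
  · intro i k hik
    simp [signedBinomialMatrix, Nat.choose_eq_zero_of_lt (show (i : ℕ) < k from hik)]

theorem signedBinomialMatrix_mulVec_delannoy (p m : ℕ) :
    signedBinomialMatrix R (p + 1) m *ᵥ (fun k => ((k : ℕ) ! * delannoy p k : R))
      = fun i : Fin m => (p.descFactorial i : R) := by
  ext ⟨i, hi⟩
  let term : ℕ → R := fun k =>
    (-1) ^ (i - k) * (i.choose k : R) * ((p + 1).descFactorial (i - k)) * (k ! * delannoy p k)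
  have hterm : ∀ k ∈ Finset.range (i + 1),
      term k = i ! * (delannoy p k * ((-1) ^ (i - k) * (p + 1).choose (i - k))) := fun k hk => by
    have key := congrArg (Nat.cast : ℕ → R)
      (Nat.choose_mul_descFactorial_mul_factorial (Finset.mem_range_succ_iff.mp hk) (p + 1))
    push_cast at key
    linear_combination ((-1) ^ (i - k) * (delannoy p k : R)) * key
  calc (signedBinomialMatrix R (p + 1) m *ᵥ fun k => ((k : ℕ) ! * delannoy p k : R)) ⟨i, hi⟩
      = ∑ k ∈ Finset.range m, term k := Fin.sum_univ_eq_sum_range term m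
    _ = ∑ k ∈ Finset.range (i + 1), term k := by
        refine (Finset.sum_subset (Finset.range_mono hi) fun k _ hk => ?_).symm
        have hik : i < k := by simpa using hk
        simp [term, Nat.choose_eq_zero_of_lt hik]
    _ = p.descFactorial i := by
        rw [Finset.sum_congr rfl hterm, ← Finset.mul_sum, sum_delannoy_mul_neg_one_pow_mul_choose,
          descFactorial_eq_factorial_mul_choose, Nat.cast_mul]

def shiftWithFirstCol {m : ℕ} (v : Fin (m + 1) → R) : Matrix (Fin (m + 1)) (Fin (m + 1)) R :=
  Matrix.of fun i j => if (j : ℕ) = 0 then v i else if (i : ℕ) + 1 = j then 1 else 0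

theorem det_shiftWithFirstCol {m : ℕ} (v : Fin (m + 1) → R) :
    (shiftWithFirstCol v).det = (-1) ^ m * v (Fin.last m) := by
  rw [Matrix.det_succ_row _ (Fin.last m), Finset.sum_eq_single 0]
  · have : (shiftWithFirstCol v).submatrix (Fin.last m).succAbove (Fin.succAbove 0) = 1 := by
      ext a b
      simp [shiftWithFirstCol, one_apply, Fin.val_eq_val]
    rw [this, det_one]
    simp only [shiftWithFirstCol, of_apply, Fin.val_zero, if_pos, Fin.val_last, add_zero, mul_one]
  · intro j _ hj
    simp only [shiftWithFirstCol, of_apply, Fin.val_last]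
    rw [if_neg (Fin.val_ne_zero_iff.mpr hj), if_neg (by omega), mul_zero, zero_mul]
  · simp

theorem delannoyMatrix_eq_mul (p q : ℕ) :
    delannoyMatrix p q = signedBinomialMatrix ℚ (p + 1) (q + 1) *
      shiftWithFirstCol (fun k => ((k : ℕ) ! * delannoy p k : ℚ)) := by
  ext i j
  rcases Fin.eq_zero_or_eq_succ j with rfl | ⟨j, rfl⟩
  · have h := congrFun (signedBinomialMatrix_mulVec_delannoy (R := ℚ) p (q + 1)) i
    simpa [delannoyMatrix, shiftWithFirstCol, mulVec, dotProduct, mul_apply] using h.symm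
  · rw [mul_apply, Finset.sum_eq_single j.castSucc]
    · simp [delannoyMatrix, shiftWithFirstCol, signedBinomialMatrix]
    · intro k _ hk
      have hk' : (k : ℕ) ≠ j := fun h => hk (Fin.ext h)
      simp [shiftWithFirstCol, hk']
    · simp

theorem det_delannoyMatrix (p q : ℕ) :
    (delannoyMatrix p q).det = (-1) ^ q * q ! * delannoy p q := by
  rw [delannoyMatrix_eq_mul, Matrix.det_mul, det_signedBinomialMatrix, det_shiftWithFirstCol,
    one_mul, Fin.val_last, mul_assoc]

/-- A determinantal expression of the central Delannoy numbers:
`D(n) = D(n,n) = ((-1)^n / n!) · det W(n,n)`. -/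
theorem centralDelannoy_eq_det (n : ℕ) :
    (delannoy n n : ℚ) =
      (-1 : ℚ) ^ n / (n.factorial : ℚ) * (delannoyMatrix n n).det := by
  rw [det_delannoyMatrix]
  field_simp
  rw [← pow_mul, pow_mul', neg_one_sq, one_pow, mul_one]
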